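/- Let Y₁,…,Yₙ be i.i.d. with variance σ² > 0 and modified kurtosis κ̃, and let s²ₙ be the sample variance. For any α ∈ (0,1), with probability at least 1 − α one has s²ₙ < σ² · (1 + sqrt((κ̃ − (n−3)/(n−1)) · (1−α)/(α n))). -/

import Mathlib

open MeasureTheory ProbabilityTheory Finset
open scoped ENNReal

/-!
Write `Zᵢ = Yᵢ - 𝔼Y₀`, `S = ∑ Zᵢ` and `Q = ∑ Zᵢ²`, so that `(n - 1) s²ₙ = Q - S² / n`.
Splitting off one summand and using independence expresses `𝔼S²`, `𝔼S⁴`, `𝔼[Q S²]` and `𝔼Q²`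
through `σ²` and `𝔼Z⁴ = κ̃ σ⁴` alone (third moments always meet a centred factor), which gives
`𝔼s²ₙ = σ²` and `Var(s²ₙ) = σ⁴ (κ̃ - (n - 3)/(n - 1)) / n`. Cantelli's inequality
`P(X < 𝔼X + t) ≥ t² / (Var X + t²)` with `t² = Var(s²ₙ) (1 - α) / α` then gives the bound;
`t > 0` because `κ̃ ≥ 1 > (n - 3)/(n - 1)`.
-/

noncomputable def sampleVariance {n : ℕ} (x : Fin n → ℝ) : ℝ :=
  1 / ((n : ℝ) - 1) * ∑ i, (x i - 1 / (n : ℝ) * ∑ j, x j) ^ 2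

lemma sampleVariance_sub_const {n : ℕ} (x : Fin n → ℝ) (c : ℝ) :
    sampleVariance (fun i ↦ x i - c) = sampleVariance x := by
  rcases Nat.eq_zero_or_pos n with rfl | hn
  · simp [sampleVariance]
  have : (n : ℝ) ≠ 0 := by positivity
  simp only [sampleVariance, sum_sub_distrib, sum_const, card_univ, Fintype.card_fin, nsmul_eq_mul]
  congr 1
  refine sum_congr rfl fun i _ ↦ ?_
  field_simp
  ring

lemma sampleVariance_eq {n : ℕ} (hn : n ≠ 0) (x : Fin n → ℝ) :
    sampleVariance x = (∑ i, x i ^ 2 - (∑ i, x i) ^ 2 / n) / (n - 1) := by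
  have : (n : ℝ) ≠ 0 := by positivity
  simp only [sampleVariance, sub_sq, sum_add_distrib, sum_sub_distrib, ← sum_mul, ← mul_sum,
    sum_const, card_univ, Fintype.card_fin, nsmul_eq_mul]
  field_simp
  ring

section

variable {Ω ι : Type*} {mΩ : MeasurableSpace Ω} {μ : Measure Ω}

namespace MeasureTheory.MemLp

lemma integrable_pow_of_le [IsFiniteMeasure μ] {X : Ω → ℝ} {p k : ℕ}
    (hX : MemLp X p μ) (hk : k ≤ p) : Integrable (X ^ k) μ := by
  rcases Nat.eq_zero_or_pos k with rfl | hk0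
  · exact integrable_const (1 : ℝ)
  refine (integrable_norm_iff (hX.aestronglyMeasurable.pow k)).mp ?_
  simpa [norm_pow] using (hX.mono_exponent (by exact_mod_cast hk)).integrable_norm_pow hk0.ne'

lemma sq_memLp_two {X : Ω → ℝ} (hX : MemLp X 4 μ) : MemLp (X ^ 2) 2 μ := by
  have : ENNReal.HolderTriple 4 4 2 := ⟨by
    rw [← two_mul, show (4 : ℝ≥0∞) = 2 * 2 by norm_num, ENNReal.mul_inv (by simp) (by simp),
      ← mul_assoc, ENNReal.mul_inv_cancel (by simp) (by simp), one_mul]⟩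
  simpa [sq] using hX.mul hX

end MeasureTheory.MemLp

lemma MeasureTheory.integral_sum_eq_card_mul {W : ι → Ω → ℝ} (hW : ∀ i, Integrable (W i) μ)
    {m : ℝ} (h1 : ∀ i, ∫ ω, W i ω ∂μ = m) (s : Finset ι) :
    ∫ ω, ∑ j ∈ s, W j ω ∂μ = #s * m := by
  simp [integral_finsetSum s fun j _ ↦ hW j, h1]

namespace ProbabilityTheory

lemma memLp_sampleVariance {n : ℕ} {Z : Fin n → Ω → ℝ} (hmem : ∀ i, MemLp (Z i) 4 μ) :
    MemLp (fun ω ↦ sampleVariance (Z · ω)) 2 μ := by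
  have hdev (i : Fin n) : MemLp (fun ω ↦ (Z i ω - 1 / (n : ℝ) * ∑ j, Z j ω) ^ 2) 2 μ :=
    ((hmem i).sub ((memLp_finsetSum _ fun j _ ↦ hmem j).const_mul _)).sq_memLp_two
  exact (memLp_finsetSum _ fun i _ ↦ hdev i).const_mul _

lemma IndepFun.integral_pow_mul_add_pow [IsFiniteMeasure μ] {X Y : Ω → ℝ}
    (hXY : IndepFun X Y μ) {p a b : ℕ} (hX : MemLp X p μ) (hY : MemLp Y p μ) (hab : a + b ≤ p) :
    ∫ ω, X ω ^ a * (X ω + Y ω) ^ b ∂μ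
      = ∑ k ∈ range (b + 1),
          (b.choose k : ℝ) * ((∫ ω, X ω ^ (a + k) ∂μ) * ∫ ω, Y ω ^ (b - k) ∂μ) := by
  have hind (k : ℕ) : IndepFun (X ^ (a + k)) (Y ^ (b - k)) μ :=
    hXY.comp (φ := (· ^ (a + k))) (ψ := (· ^ (b - k)))
      (measurable_id.pow_const _) (measurable_id.pow_const _)
  have hexp (ω : Ω) : X ω ^ a * (X ω + Y ω) ^ b
      = ∑ k ∈ range (b + 1), (b.choose k : ℝ) * (X ω ^ (a + k) * Y ω ^ (b - k)) := by
    rw [add_pow, mul_sum]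
    exact sum_congr rfl fun k _ ↦ by ring
  have hint (k : ℕ) (hk : k ∈ range (b + 1)) :
      Integrable (fun ω ↦ (b.choose k : ℝ) * (X ω ^ (a + k) * Y ω ^ (b - k))) μ :=
    ((hind k).integrable_mul (hX.integrable_pow_of_le (by grind))
      (hY.integrable_pow_of_le (by grind))).const_mul _
  simp_rw [hexp]
  rw [integral_finsetSum _ hint]
  refine sum_congr rfl fun k _ ↦ ?_
  rw [integral_const_mul]
  congr 1
  exact (hind k).integral_mul_eq_mul_integral (hX.aestronglyMeasurable.pow _)
    (hY.aestronglyMeasurable.pow _)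

lemma iIndepFun.indepFun_sum_of_notMem {W : ι → Ω → ℝ} (hW : iIndepFun W μ)
    (hmeas : ∀ i, AEMeasurable (W i) μ) {s : Finset ι} {i : ι} (hi : i ∉ s) :
    IndepFun (W i) (fun ω ↦ ∑ j ∈ s, W j ω) μ := by
  simpa [Finset.sum_fn] using (hW.indepFun_finsetSum_of_notMem₀ hmeas hi).symm

variable [IsProbabilityMeasure μ]

lemma integral_sub_integral_add_sq {X : Ω → ℝ}
    (hX : MemLp X 2 μ) (u : ℝ) : ∫ ω, (X ω - μ[X] + u) ^ 2 ∂μ = Var[X; μ] + u ^ 2 := by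
  have hXint := hX.integrable one_le_two
  have hEY : ∫ ω, (X ω - μ[X] + u) ∂μ = u := by
    rw [integral_add (f := fun ω ↦ X ω - μ[X]) (hXint.sub (integrable_const _))
        (integrable_const _),
      integral_sub hXint (integrable_const _)]
    simp
  have hVarY : Var[fun ω ↦ X ω - μ[X] + u; μ] = Var[X; μ] :=
    (variance_add_const (hX.aestronglyMeasurable.sub aestronglyMeasurable_const) u).trans
      (variance_sub_const hX.aestronglyMeasurable _)
  have := variance_eq_sub (X := fun ω ↦ X ω - μ[X] + u)
    ((hX.sub (memLp_const μ[X])).add (memLp_const u))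
  simp only [hVarY, hEY, Pi.pow_apply] at this
  linarith

theorem sq_div_variance_add_sq_le_measureReal_lt {X : Ω → ℝ}
    (hX : MemLp X 2 μ) {t : ℝ} (ht : 0 < t) :
    t ^ 2 / (Var[X; μ] + t ^ 2) ≤ μ.real {ω | X ω < μ[X] + t} := by
  set v := Var[X; μ]
  have hv : 0 ≤ v := variance_nonneg X μ
  -- Markov's inequality for `(X - μ[X] + u)²`, where the shift `u = v / t` optimizes the bound
  set u := v / t
  have hu : 0 ≤ u := by positivity
  have hmarkov := mul_meas_ge_le_integral_of_nonneg (f := fun ω ↦ (X ω - μ[X] + u) ^ 2)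
    (ae_of_all _ fun ω ↦ sq_nonneg _)
    ((hX.sub (memLp_const μ[X])).add (memLp_const u)).integrable_sq ((t + u) ^ 2)
  rw [integral_sub_integral_add_sq hX u] at hmarkov
  have hsub : {ω | X ω < μ[X] + t}ᶜ ⊆ {ω | (t + u) ^ 2 ≤ (X ω - μ[X] + u) ^ 2} := fun ω hω ↦ by
    simp only [Set.mem_compl_iff, Set.mem_ofPred_eq, not_lt] at hω
    exact pow_le_pow_left₀ (by positivity) (show t + u ≤ X ω - μ[X] + u by linarith) 2
  have hbound : (v + u ^ 2) / (t + u) ^ 2 = 1 - t ^ 2 / (v + t ^ 2) := by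
    simp only [u]
    field_simp
    ring
  have htail : μ.real {ω | X ω < μ[X] + t}ᶜ ≤ 1 - t ^ 2 / (v + t ^ 2) := by
    rw [← hbound, le_div_iff₀ (by positivity), mul_comm]
    exact (mul_le_mul_of_nonneg_left (measureReal_mono hsub) (by positivity)).trans hmarkov
  rw [probReal_compl_eq_one_sub₀
    (nullMeasurableSet_lt hX.aemeasurable aemeasurable_const)] at htail
  linarith

lemma sq_variance_le_centralMoment_four {X : Ω → ℝ} (hX : MemLp X 4 μ) :
    Var[X; μ] ^ 2 ≤ centralMoment X 4 μ := by
  have hsq : MemLp (fun ω ↦ (X ω - μ[X]) ^ 2) 2 μ := (hX.sub (memLp_const _)).sq_memLp_two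
  have := variance_nonneg (fun ω ↦ (X ω - μ[X]) ^ 2) μ
  rw [variance_eq_sub hsq, ← variance_eq_integral hX.aemeasurable] at this
  simpa [← pow_mul, centralMoment] using this

section IndependentSums

variable {X Y : Ω → ℝ}

lemma IndepFun.integral_add_sq (hXY : IndepFun X Y μ) (hX : MemLp X 2 μ) (hY : MemLp Y 2 μ) :
    ∫ ω, (X ω + Y ω) ^ 2 ∂μ
      = ∫ ω, X ω ^ 2 ∂μ + 2 * (∫ ω, X ω ∂μ) * (∫ ω, Y ω ∂μ) + ∫ ω, Y ω ^ 2 ∂μ := by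
  have := hXY.integral_pow_mul_add_pow (p := 2) (a := 0) (b := 2) hX hY le_rfl
  simp only [pow_zero, one_mul, Nat.reduceAdd, zero_add, sum_range_succ, range_one, sum_singleton,
    Nat.choose_zero_right, Nat.cast_one, integral_const, probReal_univ, smul_eq_mul, mul_one,
    tsub_zero, Nat.choose_succ_self_right, Nat.cast_ofNat, pow_one, Nat.add_one_sub_one,
    Nat.choose_self, tsub_self] at this
  linear_combination this

lemma IndepFun.integral_add_pow_four (hXY : IndepFun X Y μ) (hX : MemLp X 4 μ) (hY : MemLp Y 4 μ) :
    ∫ ω, (X ω + Y ω) ^ 4 ∂μ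
      = ∫ ω, X ω ^ 4 ∂μ + 4 * (∫ ω, X ω ^ 3 ∂μ) * (∫ ω, Y ω ∂μ)
        + 6 * (∫ ω, X ω ^ 2 ∂μ) * (∫ ω, Y ω ^ 2 ∂μ) + 4 * (∫ ω, X ω ∂μ) * (∫ ω, Y ω ^ 3 ∂μ)
        + ∫ ω, Y ω ^ 4 ∂μ := by
  have := hXY.integral_pow_mul_add_pow (p := 4) (a := 0) (b := 4) hX hY le_rfl
  simp only [pow_zero, one_mul, Nat.reduceAdd, zero_add, sum_range_succ, range_one, sum_singleton,
    Nat.choose_zero_right, Nat.cast_one, integral_const, probReal_univ, smul_eq_mul, mul_one,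
    tsub_zero, Nat.choose_one_right, Nat.cast_ofNat, pow_one, Nat.add_one_sub_one,
    Nat.choose_two_right, Nat.reduceMul, Nat.reduceDiv, Nat.reduceSub, Nat.choose_succ_self_right,
    Nat.choose_self, tsub_self] at this
  linear_combination this

lemma IndepFun.integral_sq_mul_add_sq (hXY : IndepFun X Y μ) (hX : MemLp X 4 μ) (hY : MemLp Y 4 μ) :
    ∫ ω, X ω ^ 2 * (X ω + Y ω) ^ 2 ∂μ
      = ∫ ω, X ω ^ 4 ∂μ + 2 * (∫ ω, X ω ^ 3 ∂μ) * (∫ ω, Y ω ∂μ)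
        + (∫ ω, X ω ^ 2 ∂μ) * (∫ ω, Y ω ^ 2 ∂μ) := by
  have := hXY.integral_pow_mul_add_pow (p := 4) (a := 2) (b := 2) hX hY le_rfl
  simp only [Nat.reduceAdd, sum_range_succ, range_one, sum_singleton, Nat.choose_zero_right,
    Nat.cast_one, add_zero, tsub_zero, one_mul, Nat.choose_succ_self_right, Nat.cast_ofNat,
    Nat.add_one_sub_one, pow_one, Nat.choose_self, tsub_self, pow_zero, integral_const,
    probReal_univ, smul_eq_mul, mul_one] at this
  linear_combination this

lemma iIndepFun.integral_sum_sq {W : ι → Ω → ℝ} (hW : iIndepFun W μ)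
    (hmem : ∀ i, MemLp (W i) 2 μ) {m v : ℝ} (h1 : ∀ i, ∫ ω, W i ω ∂μ = m)
    (h2 : ∀ i, ∫ ω, W i ω ^ 2 ∂μ = v) (s : Finset ι) :
    ∫ ω, (∑ j ∈ s, W j ω) ^ 2 ∂μ = #s * v + #s * (#s - 1) * m ^ 2 := by
  classical
  induction s using Finset.induction_on with
  | empty => simp
  | insert i s hi ih =>
    simp_rw [sum_insert hi]
    rw [(hW.indepFun_sum_of_notMem (fun j ↦ (hmem j).aemeasurable) hi).integral_add_sq
      (hmem i) (memLp_finsetSum s fun j _ ↦ hmem j), h1, h2, ih,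
      integral_sum_eq_card_mul (fun j ↦ (hmem j).integrable one_le_two) h1,
      card_insert_of_notMem hi]
    push_cast
    ring

variable {Z : ι → Ω → ℝ} (hZ : iIndepFun Z μ) (hmem : ∀ i, MemLp (Z i) 4 μ) {σ2 m4 : ℝ}
  (h1 : ∀ i, ∫ ω, Z i ω ∂μ = 0) (h2 : ∀ i, ∫ ω, Z i ω ^ 2 ∂μ = σ2)
  (h4 : ∀ i, ∫ ω, Z i ω ^ 4 ∂μ = m4)
include hZ hmem h2 h4

lemma iIndepFun.integral_sum_sq_sq (s : Finset ι) :
    ∫ ω, (∑ j ∈ s, Z j ω ^ 2) ^ 2 ∂μ = #s * (m4 + (#s - 1) * σ2 ^ 2) := by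
  have hZ2 : iIndepFun (fun i ω ↦ Z i ω ^ 2) μ :=
    hZ.comp (fun _ x ↦ x ^ 2) fun _ ↦ measurable_id.pow_const 2
  rw [hZ2.integral_sum_sq (fun i ↦ (hmem i).sq_memLp_two) h2
    (fun i ↦ by simpa [← pow_mul] using h4 i) s]
  ring

include h1

lemma iIndepFun.integral_sum_pow_four (s : Finset ι) :
    ∫ ω, (∑ j ∈ s, Z j ω) ^ 4 ∂μ = #s * m4 + 3 * #s * (#s - 1) * σ2 ^ 2 := by
  classical
  have hmem2 i : MemLp (Z i) 2 μ := (hmem i).mono_exponent (by norm_num)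
  induction s using Finset.induction_on with
  | empty => simp
  | insert i s hi ih =>
    simp_rw [sum_insert hi]
    rw [(hZ.indepFun_sum_of_notMem (fun j ↦ (hmem j).aemeasurable) hi).integral_add_pow_four
      (hmem i) (memLp_finsetSum s fun j _ ↦ hmem j), h1, h2, h4, ih, hZ.integral_sum_sq hmem2 h1 h2,
      integral_sum_eq_card_mul (fun j ↦ (hmem2 j).integrable one_le_two) h1,
      card_insert_of_notMem hi]
    push_cast
    ring

lemma iIndepFun.integral_sum_sq_mul_sum_sq (s : Finset ι) :
    ∫ ω, (∑ j ∈ s, Z j ω ^ 2) * (∑ j ∈ s, Z j ω) ^ 2 ∂μ = #s * (m4 + (#s - 1) * σ2 ^ 2) := by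
  classical
  have hmem2 i : MemLp (Z i) 2 μ := (hmem i).mono_exponent (by norm_num)
  have hterm : ∀ i ∈ s, ∫ ω, Z i ω ^ 2 * (∑ j ∈ s, Z j ω) ^ 2 ∂μ = m4 + (#s - 1) * σ2 ^ 2 := by
    intro i hi
    have hsplit (ω : Ω) : ∑ j ∈ s, Z j ω = Z i ω + ∑ j ∈ s.erase i, Z j ω :=
      (add_sum_erase s (Z · ω) hi).symm
    simp_rw [hsplit]
    rw [(hZ.indepFun_sum_of_notMem (fun j ↦ (hmem j).aemeasurable)
      (notMem_erase i s)).integral_sq_mul_add_sq (hmem i) (memLp_finsetSum _ fun j _ ↦ hmem j),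
      h2, h4, hZ.integral_sum_sq hmem2 h1 h2,
      integral_sum_eq_card_mul (fun j ↦ (hmem2 j).integrable one_le_two) h1,
      card_erase_of_mem hi, Nat.cast_pred (card_pos.mpr ⟨i, hi⟩)]
    ring
  have hint (i : ι) : Integrable (fun ω ↦ Z i ω ^ 2 * (∑ j ∈ s, Z j ω) ^ 2) μ :=
    (hmem i).sq_memLp_two.integrable_mul (memLp_finsetSum s fun j _ ↦ hmem j).sq_memLp_two
  simp_rw [sum_mul]
  rw [integral_finsetSum _ fun i _ ↦ hint i, sum_congr rfl hterm, sum_const, nsmul_eq_mul]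

end IndependentSums

section SampleVariance

variable {n : ℕ} {Z : Fin n → Ω → ℝ} {σ2 m4 : ℝ}

lemma iIndepFun.integral_sampleVariance (hZ : iIndepFun Z μ)
    (hmem : ∀ i, MemLp (Z i) 2 μ) (h1 : ∀ i, ∫ ω, Z i ω ∂μ = 0)
    (h2 : ∀ i, ∫ ω, Z i ω ^ 2 ∂μ = σ2) (hn : 2 ≤ n) :
    ∫ ω, sampleVariance (Z · ω) ∂μ = σ2 := by
  have hn0 : (n : ℝ) ≠ 0 := by positivity
  have hn1 : (n : ℝ) - 1 ≠ 0 := by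
    have : (2 : ℝ) ≤ n := by exact_mod_cast hn
    linarith
  have hQ : Integrable (fun ω ↦ ∑ i, Z i ω ^ 2) μ :=
    integrable_finsetSum _ fun i _ ↦ (hmem i).integrable_sq
  have hS : Integrable (fun ω ↦ (∑ i, Z i ω) ^ 2) μ :=
    (memLp_finsetSum _ fun i _ ↦ hmem i).integrable_sq
  simp_rw [sampleVariance_eq (by omega : n ≠ 0)]
  rw [integral_div, integral_sub hQ (hS.div_const _), integral_div,
    integral_sum_eq_card_mul (fun i ↦ (hmem i).integrable_sq) h2, hZ.integral_sum_sq hmem h1 h2]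
  simp only [card_univ, Fintype.card_fin]
  field_simp
  ring

lemma iIndepFun.variance_sampleVariance (hZ : iIndepFun Z μ)
    (hmem : ∀ i, MemLp (Z i) 4 μ) (h1 : ∀ i, ∫ ω, Z i ω ∂μ = 0)
    (h2 : ∀ i, ∫ ω, Z i ω ^ 2 ∂μ = σ2) (h4 : ∀ i, ∫ ω, Z i ω ^ 4 ∂μ = m4) (hn : 2 ≤ n) :
    Var[fun ω ↦ sampleVariance (Z · ω); μ] = (m4 - σ2 ^ 2 * (n - 3) / (n - 1)) / n := by
  have hn0 : (n : ℝ) ≠ 0 := by positivity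
  have hn1 : (n : ℝ) - 1 ≠ 0 := by
    have : (2 : ℝ) ≤ n := by exact_mod_cast hn
    linarith
  set Q := fun ω ↦ ∑ i, Z i ω ^ 2
  set S := fun ω ↦ ∑ i, Z i ω
  have hQ : MemLp Q 2 μ := memLp_finsetSum _ fun i _ ↦ (hmem i).sq_memLp_two
  have hS : MemLp S 4 μ := memLp_finsetSum _ fun i _ ↦ hmem i
  have hsq (ω : Ω) : sampleVariance (Z · ω) ^ 2
      = (Q ω ^ 2 + (-2 / n) * (Q ω * S ω ^ 2) + (1 / n ^ 2) * S ω ^ 4) / (n - 1) ^ 2 := by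
    rw [sampleVariance_eq (by omega)]
    field_simp
    ring
  have hQQ : Integrable (fun ω ↦ Q ω ^ 2) μ := hQ.integrable_sq
  have hQS : Integrable (fun ω ↦ Q ω * S ω ^ 2) μ := hQ.integrable_mul hS.sq_memLp_two
  have hS4 : Integrable (fun ω ↦ S ω ^ 4) μ := hS.integrable_pow_of_le (p := 4) le_rfl
  have hQQS : Integrable (fun ω ↦ Q ω ^ 2 + -2 / n * (Q ω * S ω ^ 2)) μ :=
    hQQ.add (hQS.const_mul _)
  rw [variance_eq_sub (memLp_sampleVariance hmem),
    hZ.integral_sampleVariance (fun i ↦ (hmem i).mono_exponent (by norm_num)) h1 h2 hn]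
  simp only [Pi.pow_apply, hsq]
  rw [integral_div, integral_add hQQS (hS4.const_mul _), integral_add hQQ (hQS.const_mul _),
    integral_const_mul, integral_const_mul]
  simp only [Q, S]
  rw [hZ.integral_sum_sq_sq hmem h2 h4, hZ.integral_sum_sq_mul_sum_sq hmem h1 h2 h4,
    hZ.integral_sum_pow_four hmem h1 h2 h4]
  simp only [card_univ, Fintype.card_fin]
  field_simp
  ring

variable {Y : Fin n → Ω → ℝ} {Y₀ : Ω → ℝ}

lemma iIndepFun.integral_sampleVariance_of_identDistrib (hY : iIndepFun Y μ)
    (hident : ∀ i, IdentDistrib (Y i) Y₀ μ μ) (hY₀ : MemLp Y₀ 2 μ) (hn : 2 ≤ n) :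
    ∫ ω, sampleVariance (Y · ω) ∂μ = Var[Y₀; μ] := by
  set c := μ[Y₀]
  have hmom i (k : ℕ) : ∫ ω, (Y i ω - c) ^ k ∂μ = centralMoment Y₀ k μ :=
    ((hident i).comp ((measurable_id.sub_const c).pow_const k)).integral_eq
  have hV (ω : Ω) : sampleVariance (Y · ω) = sampleVariance (fun i ↦ Y i ω - c) :=
    (sampleVariance_sub_const _ c).symm
  simp only [hV]
  exact (hY.comp (fun _ x ↦ x - c) fun _ ↦ measurable_id.sub_const c).integral_sampleVariance
    (fun i ↦ ((hident i).symm.memLp_snd hY₀).sub (memLp_const c))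
    (fun i ↦ by simpa using (hmom i 1).trans centralMoment_one)
    (fun i ↦ (hmom i 2).trans (centralMoment_two_eq_variance hY₀.aemeasurable)) hn

lemma iIndepFun.variance_sampleVariance_of_identDistrib (hY : iIndepFun Y μ)
    (hident : ∀ i, IdentDistrib (Y i) Y₀ μ μ) (hY₀ : MemLp Y₀ 4 μ) (hn : 2 ≤ n) :
    Var[fun ω ↦ sampleVariance (Y · ω); μ]
      = (centralMoment Y₀ 4 μ - Var[Y₀; μ] ^ 2 * (n - 3) / (n - 1)) / n := by
  set c := μ[Y₀]
  have hmom i (k : ℕ) : ∫ ω, (Y i ω - c) ^ k ∂μ = centralMoment Y₀ k μ :=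
    ((hident i).comp ((measurable_id.sub_const c).pow_const k)).integral_eq
  have hV (ω : Ω) : sampleVariance (Y · ω) = sampleVariance (fun i ↦ Y i ω - c) :=
    (sampleVariance_sub_const _ c).symm
  simp only [hV]
  exact (hY.comp (fun _ x ↦ x - c) fun _ ↦ measurable_id.sub_const c).variance_sampleVariance
    (fun i ↦ ((hident i).symm.memLp_snd hY₀).sub (memLp_const c))
    (fun i ↦ by simpa using (hmom i 1).trans centralMoment_one)
    (fun i ↦ (hmom i 2).trans (centralMoment_two_eq_variance hY₀.aemeasurable))
    (fun i ↦ hmom i 4) hn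

end SampleVariance

end ProbabilityTheory

end

/-- Upper-deviation bound for the sample variance: for i.i.d. `Y 0, …, Y (n-1)` (`n ≥ 2`),
each distributed as `Y₀` with variance `σ² > 0` and modified kurtosis `κ̃`, and any
`α ∈ (0,1)`, with probability at least `1 - α`,
`s²ₙ < σ² (1 + √((κ̃ - (n-3)/(n-1)) (1-α)/(α n)))`. -/
theorem sample_variance_upper_deviation
    {Ω : Type*} [MeasureSpace Ω] [IsProbabilityMeasure (ℙ : Measure Ω)]
    (n : ℕ) (hn : 2 ≤ n) (Y₀ : Ω → ℝ) (Y : Fin n → Ω → ℝ)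
    (hindep : iIndepFun Y ℙ)
    (hident : ∀ i, IdentDistrib (Y i) Y₀ ℙ ℙ)
    (hmem : MemLp Y₀ 4 ℙ)
    (σsq κtilde : ℝ) (hσ : σsq = variance Y₀ ℙ) (hσpos : 0 < σsq)
    (hκ : κtilde = (∫ ω, (Y₀ ω - ∫ ω', Y₀ ω' ∂ℙ) ^ 4 ∂ℙ) / σsq ^ 2)
    (α : ℝ) (hα : α ∈ Set.Ioo (0 : ℝ) 1) :
    ENNReal.ofReal (1 - α) ≤
      ℙ {ω | (1 / ((n : ℝ) - 1)) * ∑ i, (Y i ω - (1 / (n : ℝ)) * ∑ j, Y j ω) ^ 2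
          < σsq * (1 + Real.sqrt ((κtilde - ((n : ℝ) - 3) / ((n : ℝ) - 1))
              * ((1 - α) / (α * n)))) } := by
  obtain ⟨hα0, hα1⟩ := hα
  have hn' : (2 : ℝ) ≤ n := by exact_mod_cast hn
  set c := κtilde - ((n : ℝ) - 3) / ((n : ℝ) - 1)
  replace hκ : κtilde = centralMoment Y₀ 4 ℙ / σsq ^ 2 := hκ
  have hκ1 : 1 ≤ κtilde := by
    rw [hκ, le_div_iff₀ (by positivity), one_mul, hσ]
    exact sq_variance_le_centralMoment_four hmem
  have hc : 0 < c := by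
    have : ((n : ℝ) - 3) / ((n : ℝ) - 1) < 1 := (div_lt_one (by linarith)).mpr (by linarith)
    linarith
  have hVar : Var[fun ω ↦ sampleVariance (Y · ω); ℙ] = σsq ^ 2 * c / n := by
    rw [hindep.variance_sampleVariance_of_identDistrib hident hmem hn, ← hσ]
    simp only [c, hκ]
    field_simp
  set t := σsq * √(c * ((1 - α) / (α * n)))
  have ht : 0 < t := mul_pos hσpos (Real.sqrt_pos.mpr (by positivity))
  have hprob : t ^ 2 / (Var[fun ω ↦ sampleVariance (Y · ω); ℙ] + t ^ 2) = 1 - α := by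
    rw [hVar, mul_pow, Real.sq_sqrt (by positivity)]
    field_simp
    ring
  have hcantelli := sq_div_variance_add_sq_le_measureReal_lt
    (memLp_sampleVariance fun i ↦ (hident i).symm.memLp_snd hmem) ht
  rw [hprob, hindep.integral_sampleVariance_of_identDistrib hident
    (hmem.mono_exponent (by norm_num)) hn, ← hσ] at hcantelli
  rw [show σsq * (1 + √(c * ((1 - α) / (α * n)))) = σsq + t by ring]
  exact ENNReal.ofReal_le_of_le_toReal hcantelli
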